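/- arXiv:2504.00120 — 2 statements merged into one kernel-verified Lean document; each statement's English description precedes it below -/
import Mathlib

section
/- If exchangeable real-valued nonconformity scores R₁,…,R_m, R_{m+1} are given and ε̂ is the ⌈(m+1)(1-α)⌉-th smallest value among R₁,…,R_m, then P(R_{m+1} ≤ ε̂) ≥ 1 - α, provided ⌈(m+1)(1-α)⌉ ≤ m. -/
/-!
By exchangeability, the events "fewer than `k` scores lie strictly below `R j`" all have the same
probability. Every outcome lies in at least `k` of these `m + 1` events (those of the indices whose
score is at most the `k`-th smallest of all scores), so each of them has probability at least
`k / (m + 1) ≥ 1 - α`. Finally, if fewer than `k` calibration scores lie strictly below the new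
score, the new score is at most the `k`-th smallest calibration score.
-/

open MeasureTheory

/-- The `k`-th smallest element of a list of reals (1-indexed). -/
noncomputable def kthSmallest (l : List ℝ) (k : ℕ) : ℝ :=
  (l.mergeSort (fun a b => a ≤ b)).getD (k - 1) 0

open Finset

namespace List

lemma countP_ofFn {α : Type*} {n : ℕ} (f : Fin n → α) (p : α → Bool) :
    (ofFn f).countP p = #{i | p (f i)} := by
  rw [ofFn_eq_map, countP_map, countP_eq_length_filter]
  simp [Finset.filter, Fin.univ_def, Multiset.filter_coe, Function.comp_def]

variable {α : Type*} [LinearOrder α] {s : List α} {i : ℕ}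

lemma SortedLE.succ_le_countP_le_getElem (hs : s.SortedLE) (hi : i < s.length) :
    i + 1 ≤ s.countP (· ≤ s[i]) :=
  calc i + 1 = (s.take (i + 1)).length := by rw [length_take]; omega
    _ = (s.take (i + 1)).countP (· ≤ s[i]) := by
        refine (countP_eq_length.mpr fun a ha => ?_).symm
        obtain ⟨j, hj, rfl⟩ := mem_iff_getElem.mp ha
        simpa using hs.getElem_le_getElem_of_le (by rw [length_take] at hj; omega)
    _ ≤ s.countP (· ≤ s[i]) := (take_sublist _ s).countP_le

lemma SortedLE.countP_lt_getElem_le (hs : s.SortedLE) (hi : i < s.length) :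
    s.countP (· < s[i]) ≤ i := by
  have hdrop : (s.drop i).countP (· < s[i]) = 0 := by
    refine countP_eq_zero.mpr fun a ha => ?_
    obtain ⟨j, hj, rfl⟩ := mem_iff_getElem.mp ha
    simpa using hs.getElem_le_getElem_of_le (by omega)
  calc s.countP (· < s[i]) = (s.take i).countP (· < s[i]) + (s.drop i).countP (· < s[i]) := by
        rw [← countP_append, take_append_drop]
    _ ≤ i := by rw [hdrop, add_zero]; exact countP_le_length.trans (length_take_le _ _)

end List

section kthSmallest

variable {l : List ℝ} {k : ℕ}

lemma kthSmallest_eq_getElem (hk : k - 1 < l.length) :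
    kthSmallest l k = (l.mergeSort (· ≤ ·))[k - 1]'(by rwa [List.length_mergeSort]) :=
  List.getD_eq_getElem _ _ _

lemma le_countP_le_kthSmallest (hk : k ≤ l.length) : k ≤ l.countP (· ≤ kthSmallest l k) := by
  rcases Nat.eq_zero_or_pos k with rfl | hk0
  · exact Nat.zero_le _
  have hi : k - 1 < (l.mergeSort (· ≤ ·)).length := by rw [List.length_mergeSort]; omega
  rw [← (List.mergeSort_perm l _).countP_eq, kthSmallest_eq_getElem (by omega)]
  simpa [Nat.sub_add_cancel hk0] using List.sortedLE_mergeSort.succ_le_countP_le_getElem hi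

lemma countP_lt_kthSmallest_lt (hk0 : 0 < k) (hk : k ≤ l.length) :
    l.countP (· < kthSmallest l k) < k := by
  have hi : k - 1 < (l.mergeSort (· ≤ ·)).length := by rw [List.length_mergeSort]; omega
  rw [← (List.mergeSort_perm l _).countP_eq, kthSmallest_eq_getElem (by omega)]
  exact (List.sortedLE_mergeSort.countP_lt_getElem_le hi).trans_lt (by omega)

lemma le_kthSmallest_of_countP_lt (hk : k ≤ l.length) {x : ℝ} (hx : l.countP (· < x) < k) :
    x ≤ kthSmallest l k := by
  by_contra! hlt
  have : l.countP (· ≤ kthSmallest l k) ≤ l.countP (· < x) :=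
    List.countP_mono_left fun a _ ha => by simpa using (of_decide_eq_true ha).trans_lt hlt
  have := le_countP_le_kthSmallest hk
  omega

end kthSmallest

lemma MeasureTheory.natCast_mul_measure_univ_le_sum_measure {α ι : Type*} [MeasurableSpace α]
    [Fintype ι] (μ : Measure α) {A : ι → Set α} [∀ x, DecidablePred (x ∈ A ·)]
    (hA : ∀ j, MeasurableSet (A j)) {k : ℕ} (hk : ∀ x, k ≤ #{j | x ∈ A j}) :
    (k : ENNReal) * μ Set.univ ≤ ∑ j, μ (A j) :=
  calc (k : ENNReal) * μ Set.univ = ∫⁻ _, (k : ENNReal) ∂μ := (lintegral_const _).symm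
    _ ≤ ∫⁻ x, ∑ j, (A j).indicator 1 x ∂μ := lintegral_mono fun x => by
        simpa [Set.indicator_apply] using hk x
    _ = ∑ j, μ (A j) := by
        rw [lintegral_finsetSum _ fun j _ => measurable_one.indicator (hA j)]
        simp only [lintegral_indicator_one (hA _)]

lemma measurable_comp_perm {ι β : Type*} [MeasurableSpace β] (π : Equiv.Perm ι) :
    Measurable fun x : ι → β => x ∘ π :=
  measurable_pi_lambda _ fun i => measurable_pi_apply (π i)

noncomputable def countLT {ι : Type*} [Fintype ι] (x : ι → ℝ) (j : ι) : ℕ := #{i | x i < x j}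

section countLT

variable {ι : Type*} [Fintype ι]

lemma countLT_comp_perm (x : ι → ℝ) (π : Equiv.Perm ι) (j : ι) :
    countLT (x ∘ π) j = countLT x (π j) :=
  card_equiv π (by simp)

lemma measurable_countLT (j : ι) : Measurable fun x : ι → ℝ => countLT x j := by
  simp only [countLT, card_filter]
  exact Finset.measurable_sum _ fun i _ =>
    Measurable.ite (measurableSet_lt (measurable_pi_apply i) (measurable_pi_apply j))
      measurable_const measurable_const

lemma measurableSet_countLT_lt (j : ι) (k : ℕ) : MeasurableSet {x : ι → ℝ | countLT x j < k} :=
  measurable_countLT j measurableSet_Iio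

lemma le_card_countLT_lt {n : ℕ} (x : Fin n → ℝ) {k : ℕ} (hk : k ≤ n) :
    k ≤ #{j | countLT x j < k} := by
  rcases Nat.eq_zero_or_pos k with rfl | hk0
  · exact Nat.zero_le _
  set w := kthSmallest (List.ofFn x) k
  have hlen : k ≤ (List.ofFn x).length := by simpa using hk
  calc k ≤ #{j | x j ≤ w} := by
        simpa [List.countP_ofFn] using le_countP_le_kthSmallest hlen
    _ ≤ #{j | countLT x j < k} := card_le_card fun j hj => by
        simp only [mem_filter, mem_univ, true_and] at hj ⊢
        calc countLT x j ≤ #{i | x i < w} :=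
              card_le_card fun i => by
                simpa only [mem_filter, mem_univ, true_and] using fun hi => hi.trans_le hj
          _ < k := by simpa [List.countP_ofFn] using countP_lt_kthSmallest_lt hk0 hlen

lemma measure_countLT_lt_eq {μ : Measure (ι → ℝ)}
    (hμ : ∀ π : Equiv.Perm ι, μ.map (· ∘ π) = μ) [DecidableEq ι] (j j' : ι) (k : ℕ) :
    μ {x | countLT x j < k} = μ {x | countLT x j' < k} := by
  set π := Equiv.swap j j'
  have hpre : (· ∘ π) ⁻¹' {x | countLT x j' < k} = {x | countLT x j < k} := by
    ext x
    simp [countLT_comp_perm, π]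
  rw [← hpre, ← Measure.map_apply (measurable_comp_perm π) (measurableSet_countLT_lt j' k), hμ]

lemma natCast_mul_measure_univ_le_mul_measure_countLT_lt {n : ℕ} {μ : Measure (Fin n → ℝ)}
    (hμ : ∀ π : Equiv.Perm (Fin n), μ.map (· ∘ π) = μ) {k : ℕ} (hk : k ≤ n) (j : Fin n) :
    (k : ENNReal) * μ Set.univ ≤ n * μ {x | countLT x j < k} :=
  calc (k : ENNReal) * μ Set.univ ≤ ∑ j', μ {x | countLT x j' < k} :=
        natCast_mul_measure_univ_le_sum_measure μ
          (fun j' => measurableSet_countLT_lt j' k)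
          fun x => le_card_countLT_lt x hk
    _ = n * μ {x | countLT x j < k} := by
        simp [measure_countLT_lt_eq hμ _ j]

end countLT

lemma ENNReal.ofReal_le_of_natCeil_mul_le {n : ℕ} (hn : n ≠ 0) {p : ℝ} {a : ENNReal}
    (h : (⌈(n : ℝ) * p⌉₊ : ENNReal) ≤ n * a) : ENNReal.ofReal p ≤ a := by
  refine (ENNReal.mul_le_mul_iff_right (by simpa using hn) (ENNReal.natCast_ne_top n)).mp ?_
  calc (n : ENNReal) * ENNReal.ofReal p = ENNReal.ofReal (n * p) := by
        rw [ENNReal.ofReal_mul n.cast_nonneg, ENNReal.ofReal_natCast]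
    _ ≤ ENNReal.ofReal ⌈(n : ℝ) * p⌉₊ := ENNReal.ofReal_le_ofReal (Nat.le_ceil _)
    _ ≤ n * a := by rwa [ENNReal.ofReal_natCast]

lemma last_le_kthSmallest_of_countLT_lt {n k : ℕ} (hk : k ≤ n) {x : Fin (n + 1) → ℝ}
    (hx : countLT x (Fin.last n) < k) :
    x (Fin.last n) ≤ kthSmallest (List.ofFn fun i : Fin n => x i.castSucc) k := by
  refine le_kthSmallest_of_countP_lt (by simpa using hk) ?_
  rw [List.countP_ofFn]
  simp only [decide_eq_true_eq]
  exact (card_le_card_of_injOn Fin.castSucc (by simp [Set.MapsTo])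
    (Fin.castSucc_injective n).injOn).trans_lt hx

theorem conformal_quantile_lemma_general
    {Ω : Type*} [MeasurableSpace Ω] (P : Measure Ω) [IsProbabilityMeasure P]
    (m : ℕ) (α : ℝ)
    (R : Fin (m + 1) → Ω → ℝ) (hmeas : ∀ i, Measurable (R i))
    (hexch : ∀ π : Equiv.Perm (Fin (m + 1)),
      Measure.map (fun ω => fun i => R (π i) ω) P
        = Measure.map (fun ω => fun i => R i ω) P)
    (hk : ⌈((m : ℝ) + 1) * (1 - α)⌉₊ ≤ m) :
    ENNReal.ofReal (1 - α) ≤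
      P {ω | R (Fin.last m) ω ≤
        kthSmallest (List.ofFn fun i : Fin m => R i.castSucc ω)
          ⌈((m : ℝ) + 1) * (1 - α)⌉₊} := by
  set k := ⌈((m : ℝ) + 1) * (1 - α)⌉₊
  set f : Ω → Fin (m + 1) → ℝ := fun ω i => R i ω
  have hf : Measurable f := measurable_pi_lambda _ hmeas
  have hinv (π : Equiv.Perm (Fin (m + 1))) : (P.map f).map (· ∘ π) = P.map f := by
    rw [Measure.map_map (measurable_comp_perm π) hf]
    exact hexch π
  have : IsProbabilityMeasure (P.map f) := Measure.isProbabilityMeasure_map hf.aemeasurable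
  have hrank : ENNReal.ofReal (1 - α) ≤ P.map f {x | countLT x (Fin.last m) < k} := by
    refine ENNReal.ofReal_le_of_natCeil_mul_le m.succ_ne_zero ?_
    simpa using natCast_mul_measure_univ_le_mul_measure_countLT_lt hinv
      (hk.trans m.le_succ) (Fin.last m)
  calc ENNReal.ofReal (1 - α) ≤ P.map f {x | countLT x (Fin.last m) < k} := hrank
    _ = P (f ⁻¹' {x | countLT x (Fin.last m) < k}) :=
        Measure.map_apply hf (measurableSet_countLT_lt _ _)
    _ ≤ _ := measure_mono fun ω hω => last_le_kthSmallest_of_countLT_lt hk hω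

/-- Finite-sample quantile lemma underlying split conformal prediction:
if the nonconformity scores `R 0, …, R (m-1), R m` are exchangeable and `ε̂`
is the `⌈(m+1)(1-α)⌉`-th smallest value among the first `m` (calibration)
scores, then `P(R_{m+1} ≤ ε̂) ≥ 1 - α`, provided `⌈(m+1)(1-α)⌉ ≤ m`. -/
theorem conformal_quantile_lemma
    {Ω : Type*} [MeasurableSpace Ω] (P : Measure Ω) [IsProbabilityMeasure P]
    (m : ℕ) (α : ℝ) (hα : α ∈ Set.Ioo (0:ℝ) 1)
    (R : Fin (m + 1) → Ω → ℝ) (hmeas : ∀ i, Measurable (R i))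
    (hexch : ∀ π : Equiv.Perm (Fin (m + 1)),
      Measure.map (fun ω => fun i => R (π i) ω) P
        = Measure.map (fun ω => fun i => R i ω) P)
    (hk : ⌈((m : ℝ) + 1) * (1 - α)⌉₊ ≤ m) :
    ENNReal.ofReal (1 - α) ≤
      P {ω | R (Fin.last m) ω ≤
        kthSmallest (List.ofFn fun i : Fin m => R i.castSucc ω)
          ⌈((m : ℝ) + 1) * (1 - α)⌉₊} :=
  conformal_quantile_lemma_general P m α R hmeas hexch hk
end

section
/- Split conformal prediction coverage guarantee: under exchangeability of calibration and test pairs, the conformal prediction interval Γ^α(x^{(n+1)}) = [f(x^{(n+1)}) - ε̂, f(x^{(n+1)}) + ε̂], with ε̂ the ⌈(m+1)(1-α)⌉-th smallest calibration residual |y^{(i)} - f(x^{(i)})|, satisfies P(y^{(n+1)} ∈ Γ^α(x^{(n+1)})) ≥ 1 - α. -/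
open MeasureTheory

/-!
Write `S i` for the residual of the `i`-th pair and `E i` for the event that `S i` is at most the
`k`-th smallest of the other `m` residuals, `k = ⌈(m+1)(1-α)⌉`; the claim concerns `E (last)`.
Every residual that is at most the `k`-th smallest of all `m + 1` residuals is at most the `k`-th
smallest of the others, so at every outcome at least `k` of the events `E i` occur. By
exchangeability all `E i` have the same probability, hence `(m+1)(1-α) ≤ k ≤ (m+1) P(E (last))`.
-/

open Finset
open scoped ENNReal

theorem List.ofFn_comp_subperm {α : Type*} {m n : ℕ} (g : Fin n → α) {e : Fin m → Fin n}
    (he : Function.Injective e) : (ofFn (g ∘ e)).Subperm (ofFn g) := by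
  rw [← map_ofFn, ofFn_eq_map (f := g), ← Multiset.coe_le, ← Multiset.map_coe, ← Multiset.map_coe]
  exact Multiset.map_le_map (Multiset.coe_le.mpr
    ((nodup_ofFn.mpr he).subperm fun a _ => mem_finRange a))

theorem List.countP_ofFn_s4 {α : Type*} {n : ℕ} (v : Fin n → α) (p : α → Prop) [DecidablePred p] :
    (ofFn v).countP (p ·) = #{i | p (v i)} := by
  rw [← Multiset.coe_countP, ← Fin.univ_val_map, Multiset.countP_map]
  rfl

theorem kthSmallest_le_iff {l : List ℝ} {k : ℕ} (hk₀ : 1 ≤ k) (hk : k ≤ l.length) (t : ℝ) :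
    kthSmallest l k ≤ t ↔ k ≤ l.countP (· ≤ t) := by
  set s := l.mergeSort (fun a b => a ≤ b)
  have hlen : k - 1 < s.length := by rw [List.length_mergeSort]; omega
  have hcount : #{i | s.get i ≤ t} = l.countP (· ≤ t) := by
    rw [← List.countP_ofFn_s4 s.get (· ≤ t), List.ofFn_get]
    exact (List.mergeSort_perm l _).countP_eq _
  rw [kthSmallest, List.getD_eq_getElem _ _ hlen, ← hcount]
  calc s[k - 1] ≤ t ↔ k - 1 < #{i | s.get i ≤ t} :=
        (Tuple.lt_card_le_iff_apply_le_of_monotone List.sortedLE_mergeSort.monotone_get).symm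
    _ ↔ k ≤ #{i | s.get i ≤ t} := by omega

theorem kthSmallest_le_kthSmallest_of_subperm {l l' : List ℝ} {k : ℕ} (hk₀ : 1 ≤ k)
    (hk : k ≤ l'.length) (h : l'.Subperm l) : kthSmallest l k ≤ kthSmallest l' k := by
  rw [kthSmallest_le_iff hk₀ (hk.trans h.length_le)]
  exact ((kthSmallest_le_iff hk₀ hk _).mp le_rfl).trans (h.countP_le _)

theorem le_card_le_kthSmallest_ofFn_comp {m k : ℕ} (hk : k ≤ m) (r : Fin (m + 1) → ℝ)
    {e : Fin (m + 1) → Fin m → Fin (m + 1)} (he : ∀ i, Function.Injective (e i)) :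
    k ≤ #{i | r i ≤ kthSmallest (List.ofFn (r ∘ e i)) k} := by
  rcases Nat.eq_zero_or_pos k with rfl | hk₀
  · exact Nat.zero_le _
  set q := kthSmallest (List.ofFn r) k
  have hq : k ≤ #{i | r i ≤ q} := by
    rw [← List.countP_ofFn_s4 r (· ≤ q), ← kthSmallest_le_iff hk₀ (by rw [List.length_ofFn]; omega)]
  refine hq.trans (card_le_card fun i => ?_)
  simp only [mem_filter, mem_univ, true_and]
  exact fun hi => hi.trans <| kthSmallest_le_kthSmallest_of_subperm hk₀ (by simpa using hk)
    (List.ofFn_comp_subperm r (he i))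

theorem measurable_kthSmallest_ofFn {m k : ℕ} (hk₀ : 1 ≤ k) (hk : k ≤ m) :
    Measurable fun v : Fin m → ℝ => kthSmallest (List.ofFn v) k := by
  refine measurable_of_Iic fun t => ?_
  have hcount : Measurable fun v : Fin m → ℝ => #{j | v j ≤ t} := by
    simp only [card_filter]
    exact Finset.measurable_sum _ fun j _ =>
      Measurable.ite (measurableSet_le (measurable_pi_apply j) measurable_const)
        measurable_const measurable_const
  have hpre : (fun v : Fin m → ℝ => kthSmallest (List.ofFn v) k) ⁻¹' Set.Iic t
      = (fun v : Fin m → ℝ => #{j | v j ≤ t}) ⁻¹' Set.Ici k := by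
    ext v
    rw [Set.mem_preimage, Set.mem_Iic, kthSmallest_le_iff hk₀ (by simpa using hk),
      List.countP_ofFn_s4 v (· ≤ t)]
    rfl
  exact hpre ▸ hcount .of_discrete

section Exchangeable

variable {Ω ι β : Type*} [MeasurableSpace Ω] [MeasurableSpace β]

def Exchangeable (X : Ω → ι → β) (μ : Measure Ω) : Prop :=
  ∀ π : Equiv.Perm ι, μ.map (fun ω i => X ω (π i)) = μ.map X

variable {X : Ω → ι → β} {μ : Measure Ω}

theorem Measurable.comp_perm (hX : Measurable X) (π : Equiv.Perm ι) :
    Measurable fun ω i => X ω (π i) :=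
  measurable_pi_lambda _ fun i => (measurable_pi_apply (π i)).comp hX

theorem Exchangeable.comp {γ : Type*} [MeasurableSpace γ] (hexch : Exchangeable X μ)
    (hX : Measurable X) {g : β → γ} (hg : Measurable g) :
    Exchangeable (fun ω i => g (X ω i)) μ := by
  intro π
  have hG : Measurable fun (v : ι → β) i => g (v i) :=
    measurable_pi_lambda _ fun i => hg.comp (measurable_pi_apply i)
  calc μ.map (fun ω i => g (X ω (π i)))
      = (μ.map fun ω i => X ω (π i)).map fun v i => g (v i) :=
        (Measure.map_map hG (hX.comp_perm π)).symm
    _ = (μ.map X).map fun v i => g (v i) := by rw [hexch π]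
    _ = μ.map fun ω i => g (X ω i) := Measure.map_map hG hX

theorem Exchangeable.measure_perm_mem (hexch : Exchangeable X μ) (hX : Measurable X)
    (π : Equiv.Perm ι) {S : Set (ι → β)} (hS : MeasurableSet S) :
    μ {ω | (fun i => X ω (π i)) ∈ S} = μ (X ⁻¹' S) := by
  rw [← Measure.map_apply hX hS, ← hexch π, Measure.map_apply (hX.comp_perm π) hS]
  rfl

end Exchangeable

open Classical in
theorem mul_measure_univ_le_sum_measure_of_le_card {Ω ι : Type*} [MeasurableSpace Ω] [Fintype ι]
    {μ : Measure Ω} {A : ι → Set Ω} (hA : ∀ i, MeasurableSet (A i)) {k : ℕ}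
    (hk : ∀ ω, k ≤ #{i | ω ∈ A i}) : k * μ Set.univ ≤ ∑ i, μ (A i) := by
  calc (k : ℝ≥0∞) * μ Set.univ = ∫⁻ _, (k : ℝ≥0∞) ∂μ := (lintegral_const _).symm
    _ ≤ ∫⁻ ω, ∑ i, (A i).indicator 1 ω ∂μ := lintegral_mono fun ω => by
        simp only [Set.indicator_apply, Pi.one_apply]
        rw [← natCast_card_filter]
        exact_mod_cast hk ω
    _ = ∑ i, μ (A i) := by
        rw [lintegral_finsetSum _ fun i _ => measurable_one.indicator (hA i)]
        simp only [lintegral_indicator_one (hA _)]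

theorem Exchangeable.le_mul_measure_le_kthSmallest {Ω : Type*} [MeasurableSpace Ω]
    {μ : Measure Ω} [IsProbabilityMeasure μ] {m k : ℕ} (hk : k ≤ m) {S : Ω → Fin (m + 1) → ℝ}
    (hS : Measurable S) (hexch : Exchangeable S μ) :
    k ≤ (m + 1) *
      μ {ω | S ω (Fin.last m) ≤ kthSmallest (List.ofFn fun j : Fin m => S ω j.castSucc) k} := by
  rcases Nat.eq_zero_or_pos k with rfl | hk₀
  · simp
  set E : Set (Fin (m + 1) → ℝ) :=
    {r | r (Fin.last m) ≤ kthSmallest (List.ofFn fun j : Fin m => r j.castSucc) k}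
  have hE : MeasurableSet E := measurableSet_le (measurable_pi_apply _)
    ((measurable_kthSmallest_ofFn hk₀ hk).comp
      (measurable_pi_lambda _ fun j => measurable_pi_apply _))
  set π : Fin (m + 1) → Equiv.Perm (Fin (m + 1)) := fun i => Equiv.swap (Fin.last m) i
  -- `π i` moves score `i` into the last slot, so `E` tests it against the other `m` scores.
  have hmem : ∀ ω i, (fun j => S ω (π i j)) ∈ E ↔
      S ω i ≤ kthSmallest (List.ofFn (S ω ∘ π i ∘ Fin.castSucc)) k := by
    simp [E, π, Function.comp_def]
  have hcount : ∀ ω, k ≤ #{i | (fun j => S ω (π i j)) ∈ E} := fun ω => by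
    simpa only [hmem] using le_card_le_kthSmallest_ofFn_comp hk (S ω)
      fun i => (π i).injective.comp (Fin.castSucc_injective m)
  calc (k : ℝ≥0∞) = k * μ Set.univ := by rw [measure_univ, mul_one]
    _ ≤ ∑ i, μ {ω | (fun j => S ω (π i j)) ∈ E} :=
        mul_measure_univ_le_sum_measure_of_le_card
          (fun i => measurableSet_preimage (hS.comp_perm (π i)) hE) hcount
    _ = (m + 1) * μ (S ⁻¹' E) := by
        simp only [hexch.measure_perm_mem hS _ hE, sum_const, card_univ, Fintype.card_fin,
          nsmul_eq_mul, Nat.cast_add, Nat.cast_one]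

theorem split_conformal_coverage_general
    {Ω : Type*} [MeasurableSpace Ω] (P : Measure Ω) [IsProbabilityMeasure P]
    (L m : ℕ) (α : ℝ)
    (f : (Fin L → ℝ) → ℝ) (hf : Measurable f)
    (data : Fin (m + 1) → Ω → (Fin L → ℝ) × ℝ)
    (hmeas : ∀ i, Measurable (data i))
    (hexch : ∀ π : Equiv.Perm (Fin (m + 1)),
      Measure.map (fun ω => fun i => data (π i) ω) P
        = Measure.map (fun ω => fun i => data i ω) P)
    (hk : ⌈((m : ℝ) + 1) * (1 - α)⌉₊ ≤ m) :
    ENNReal.ofReal (1 - α) ≤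
      P {ω |
        let εhat := kthSmallest
          (List.ofFn fun i : Fin m =>
            |(data i.castSucc ω).2 - f (data i.castSucc ω).1|)
          ⌈((m : ℝ) + 1) * (1 - α)⌉₊
        f (data (Fin.last m) ω).1 - εhat ≤ (data (Fin.last m) ω).2 ∧
          (data (Fin.last m) ω).2 ≤ f (data (Fin.last m) ω).1 + εhat} := by
  set k := ⌈((m : ℝ) + 1) * (1 - α)⌉₊
  have hdata : Measurable fun ω i => data i ω := measurable_pi_lambda _ hmeas
  have hres : Measurable fun p : (Fin L → ℝ) × ℝ => |p.2 - f p.1| :=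
    (measurable_snd.sub (hf.comp measurable_fst)).abs
  have hdata_exch : Exchangeable (fun ω i => data i ω) P := hexch
  have hcover := Exchangeable.le_mul_measure_le_kthSmallest
    (S := fun ω i => |(data i ω).2 - f (data i ω).1|) hk
    (measurable_pi_lambda _ fun i => hres.comp (hmeas i)) (hdata_exch.comp hdata hres)
  rw [← ENNReal.mul_le_mul_iff_right (a := (m : ℝ≥0∞) + 1) (by simp) (by simp)]
  calc ((m : ℝ≥0∞) + 1) * ENNReal.ofReal (1 - α) = ENNReal.ofReal ((m + 1) * (1 - α)) := by
        rw [ENNReal.ofReal_mul (by positivity)]; norm_cast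
    _ ≤ k := ENNReal.ofReal_le_of_le_toReal (by simpa using Nat.le_ceil _)
    _ ≤ _ := hcover
    _ = _ := by
        congr 2
        ext ω
        rw [Set.mem_ofPred_eq, Set.mem_ofPred_eq, abs_sub_comm, Set.mem_Icc_iff_abs_le]
        rfl

/-- Split conformal prediction coverage guarantee: under exchangeability of
the calibration and test pairs, the interval
`Γ^α(x) = [f(x) - ε̂, f(x) + ε̂]`, with `ε̂` the `⌈(m+1)(1-α)⌉`-th smallest
calibration residual `|y⁽ⁱ⁾ - f(x⁽ⁱ⁾)|`, covers the test response with
probability at least `1 - α`. -/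
theorem split_conformal_coverage
    {Ω : Type*} [MeasurableSpace Ω] (P : Measure Ω) [IsProbabilityMeasure P]
    (L m : ℕ) (α : ℝ) (hα : α ∈ Set.Ioo (0:ℝ) 1)
    (f : (Fin L → ℝ) → ℝ) (hf : Measurable f)
    (data : Fin (m + 1) → Ω → (Fin L → ℝ) × ℝ)
    (hmeas : ∀ i, Measurable (data i))
    (hexch : ∀ π : Equiv.Perm (Fin (m + 1)),
      Measure.map (fun ω => fun i => data (π i) ω) P
        = Measure.map (fun ω => fun i => data i ω) P)
    (hk : ⌈((m : ℝ) + 1) * (1 - α)⌉₊ ≤ m) :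
    ENNReal.ofReal (1 - α) ≤
      P {ω |
        let εhat := kthSmallest
          (List.ofFn fun i : Fin m =>
            |(data i.castSucc ω).2 - f (data i.castSucc ω).1|)
          ⌈((m : ℝ) + 1) * (1 - α)⌉₊
        f (data (Fin.last m) ω).1 - εhat ≤ (data (Fin.last m) ω).2 ∧
          (data (Fin.last m) ω).2 ≤ f (data (Fin.last m) ω).1 + εhat} :=
  split_conformal_coverage_general P L m α f hf data hmeas hexch hk
end
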